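/- arXiv:1803.05249 — 5 statements merged into one kernel-verified Lean document; each statement's English description precedes it below -/
import Mathlib

section
/- For every integer r ≥ 0 and every z ∈ [0,1), the r-th iterate of φ satisfies φ^{r}(z) = 1 - (1-z)/((r·√(1-z) + 1)²), where φ(z) = 1 - (1 + 1/√(1-z))^{-2}. In particular φ^{r}(0) = 1 - 1/(r+1)². -/
/-! With `s = √(1 - z)` one has `1 - φ z = (s / (s + 1)) ^ 2`, so `φ` acts on `1 / √(1 - z)` as
the translation `t ↦ t + 1`. Hence `1 / √(1 - φ^[r] z) = 1 / s + r`, which is the formula. -/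

open Real Set

section IterateFormula

variable {z : ℝ} (r : ℝ)

theorem one_sub_div_sq_mem_Ico (hz : z ∈ Ico (0 : ℝ) 1) (hr : 0 ≤ r) :
    1 - (1 - z) / (r * √(1 - z) + 1) ^ 2 ∈ Ico (0 : ℝ) 1 := by
  obtain ⟨hz0, hz1⟩ := hz
  have hs : 0 < √(1 - z) := sqrt_pos.2 (by linarith)
  have hs1 : √(1 - z) ≤ 1 := sqrt_le_one.2 (by linarith)
  have hle : (1 - z) / (r * √(1 - z) + 1) ^ 2 ≤ 1 := by
    rw [div_le_one (by positivity)]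
    calc 1 - z = √(1 - z) ^ 2 := (sq_sqrt (by linarith)).symm
      _ ≤ (r * √(1 - z) + 1) ^ 2 := by gcongr; linarith [mul_nonneg hr hs.le]
  have hpos : 0 < (1 - z) / (r * √(1 - z) + 1) ^ 2 := by
    have : 0 < 1 - z := by linarith
    positivity
  constructor <;> linarith

theorem sqrt_one_sub_one_sub_div_sq (hr : 0 ≤ r) :
    √(1 - (1 - (1 - z) / (r * √(1 - z) + 1) ^ 2)) = √(1 - z) / (r * √(1 - z) + 1) := by
  have hs : 0 ≤ √(1 - z) := sqrt_nonneg _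
  rw [sub_sub_cancel, sqrt_div' _ (by positivity), sqrt_sq (by positivity)]

theorem apply_one_sub_div_sq {φ : ℝ → ℝ}
    (hφ : ∀ z ∈ Ico (0 : ℝ) 1, φ z = 1 - (1 + 1 / √(1 - z))⁻¹ ^ 2)
    (hz : z ∈ Ico (0 : ℝ) 1) (hr : 0 ≤ r) :
    φ (1 - (1 - z) / (r * √(1 - z) + 1) ^ 2) = 1 - (1 - z) / ((r + 1) * √(1 - z) + 1) ^ 2 := by
  rw [hφ _ (one_sub_div_sq_mem_Ico r hz hr), sqrt_one_sub_one_sub_div_sq r hr]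
  have hsq : √(1 - z) ^ 2 = 1 - z := sq_sqrt (by linarith [hz.2])
  have hs : 0 < √(1 - z) := sqrt_pos.2 (by linarith [hz.2])
  generalize √(1 - z) = s at hs hsq ⊢
  rw [← hsq]
  field_simp
  ring

end IterateFormula

theorem phi_iterate_formula
    (φ : ℝ → ℝ)
    (hφ : ∀ z ∈ Set.Ico (0:ℝ) 1, φ z = 1 - (1 + 1 / Real.sqrt (1 - z))⁻¹ ^ 2) :
    ∀ (r : ℕ), (∀ z ∈ Set.Ico (0:ℝ) 1,
        φ^[r] z = 1 - (1 - z) / ((r * Real.sqrt (1 - z) + 1) ^ 2)) ∧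
      φ^[r] 0 = 1 - 1 / ((r : ℝ) + 1) ^ 2 := by
  intro r
  have formula : ∀ z ∈ Ico (0 : ℝ) 1,
      φ^[r] z = 1 - (1 - z) / ((r * √(1 - z) + 1) ^ 2) := by
    intro z hz
    induction r with
    | zero => simp
    | succ n ih =>
      rw [Function.iterate_succ_apply', ih, apply_one_sub_div_sq _ hφ hz n.cast_nonneg]
      push_cast
      rfl
  exact ⟨formula, by simpa using formula 0 ⟨le_rfl, one_pos⟩⟩
end

section
/- For every t ∈ (0,1), r ≥ 0 and z ∈ [0,1), the two expressions for the r-th iterate of φ_t agree: 1 - 3(1-t)/( t·sinh²( arcsinh(√(3(1-t)/(t(1-z)))) + r·arccosh(√((3-2t)/t)) ) ) = 1 - (1-z)/( √(1 + t(1-z)/(3(1-t)))·sinh(r·arccosh(√((3-2t)/t))) + cosh(r·arccosh(√((3-2t)/t))) )². -/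
/-- Inverse hyperbolic cosine (for `x ≥ 1`). -/
noncomputable def arcosh (x : ℝ) : ℝ := Real.log (x + Real.sqrt (x ^ 2 - 1))

theorem iterate_two_expressions_agree
    (t : ℝ) (ht : t ∈ Set.Ioo (0:ℝ) 1) (r : ℕ) (z : ℝ) (hz : z ∈ Set.Ico (0:ℝ) 1) :
    1 - 3 * (1 - t) /
        (t * Real.sinh (Real.arsinh (Real.sqrt (3 * (1 - t) / (t * (1 - z)))) +
              r * arcosh (Real.sqrt ((3 - 2 * t) / t))) ^ 2)
      = 1 - (1 - z) /
        (Real.sqrt (1 + t * (1 - z) / (3 * (1 - t))) *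
            Real.sinh (r * arcosh (Real.sqrt ((3 - 2 * t) / t))) +
          Real.cosh (r * arcosh (Real.sqrt ((3 - 2 * t) / t)))) ^ 2 := by
  obtain ⟨ht0, ht1⟩ := ht
  obtain ⟨hz0, hz1⟩ := hz
  have h1z : (0:ℝ) < 1 - z := by linarith
  have h1t : (0:ℝ) < 1 - t := by linarith
  set B := (r : ℝ) * arcosh (Real.sqrt ((3 - 2 * t) / t)) with hB
  have hq : (0:ℝ) < 3 * (1 - t) / (t * (1 - z)) := by positivity
  set s := Real.sqrt (3 * (1 - t) / (t * (1 - z))) with hsdef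
  have hs2 : s ^ 2 = 3 * (1 - t) / (t * (1 - z)) := Real.sq_sqrt hq.le
  have hspos : 0 < s := Real.sqrt_pos.mpr hq
  have hsq : Real.sqrt (1 + t * (1 - z) / (3 * (1 - t))) = Real.sqrt (1 + s ^ 2) / s := by
    have hinv : 1 + t * (1 - z) / (3 * (1 - t)) = (1 + s ^ 2) / s ^ 2 := by
      rw [hs2]
      field_simp
      ring
    rw [hinv, Real.sqrt_div (by positivity), Real.sqrt_sq hspos.le]
  have hsinh : Real.sinh (Real.arsinh s + B)
      = s * (Real.sqrt (1 + s ^ 2) / s * Real.sinh B + Real.cosh B) := by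
    rw [Real.sinh_add, Real.sinh_arsinh, Real.cosh_arsinh]
    field_simp
    ring
  rw [hsinh, hsq]
  set D := Real.sqrt (1 + s ^ 2) / s * Real.sinh B + Real.cosh B with hD
  congr 1
  have h3 : 3 * (1 - t) = (t * s ^ 2) * (1 - z) := by
    rw [hs2]
    field_simp
  rw [h3, mul_pow, show t * (s ^ 2 * D ^ 2) = (t * s ^ 2) * D ^ 2 by ring,
    mul_div_mul_left _ _ (by positivity : t * s ^ 2 ≠ 0)]
end

section
/- Fix t ∈ (0,1) and let F_r(z) = 1 - 3(1-t)/( t·sinh²( arcsinh(√(3(1-t)/(t(1-z)))) + r·arccosh(√((3-2t)/t)) ) ) for z ∈ [0,1) and integer r ≥ 0. Then F_0(z) = z and F_{r+1}(z) = F_r(φ_t(z)) for all r ≥ 0 and z ∈ [0,1), where φ_t(z) = 1 - ((1/√(1-z))·√((3-2t)/t) + √(1 + 3(1-t)/(t(1-z))))^{-2}. Hence F_r is the r-th iterate of φ_t. -/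
/-- The generating function `φ_t`. -/
noncomputable def phiT (t z : ℝ) : ℝ :=
  1 - ((1 / Real.sqrt (1 - z)) * Real.sqrt ((3 - 2 * t) / t) +
        Real.sqrt (1 + 3 * (1 - t) / (t * (1 - z))))⁻¹ ^ 2

/-- The claimed closed form for the `r`-th iterate of `φ_t`. -/
noncomputable def F (t : ℝ) (r : ℕ) (z : ℝ) : ℝ :=
  1 - 3 * (1 - t) /
    (t * Real.sinh (Real.arsinh (Real.sqrt (3 * (1 - t) / (t * (1 - z)))) +
          r * arcosh (Real.sqrt ((3 - 2 * t) / t))) ^ 2)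

/-!
With `a = 3(1-t)/t` one has `(3-2t)/t = 1 + a`, so `phiT t = phiA a` and `F t = FA a`; and
`θ = arcosh √(1+a)` satisfies `cosh θ = √(1+a)`, `sinh θ = √a`. The coordinate
`u = sinhCoord a`, `u(z) = arsinh √(a/(1-z))`, conjugates `φ_t` to the translation by `θ`: by the
addition formula for `sinh`,
`sinh (u(z) + θ) = √a · (√(1+a)/√(1-z) + √(1 + a/(1-z))) = √(a/(1 - φ_t z))`.
Since `u⁻¹(v) = 1 - a / sinh² v`, the closed form is `F_r = u⁻¹ ∘ (· + rθ) ∘ u`, the `r`-th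
iterate of `φ_t`.
-/

open Real hiding arcosh

theorem arcosh_eq_real_arcosh : arcosh = Real.arcosh := rfl

noncomputable def sinhCoord (a z : ℝ) : ℝ := arsinh √(a / (1 - z))

noncomputable def phiA (a z : ℝ) : ℝ :=
  1 - (√(1 + a) / √(1 - z) + √(1 + a / (1 - z)))⁻¹ ^ 2

noncomputable def FA (a : ℝ) (r : ℕ) (z : ℝ) : ℝ :=
  1 - a / sinh (sinhCoord a z + r * arcosh √(1 + a)) ^ 2

theorem three_sub_two_mul_div_eq {t : ℝ} (ht : t ≠ 0) :
    (3 - 2 * t) / t = 1 + 3 * (1 - t) / t := by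
  field_simp
  ring

theorem phiT_eq_phiA {t : ℝ} (ht : t ≠ 0) : phiT t = phiA (3 * (1 - t) / t) := by
  funext z
  rw [phiT, phiA, three_sub_two_mul_div_eq ht, one_div_mul_eq_div, div_mul_eq_div_div]

theorem F_eq_FA {t : ℝ} (ht : t ≠ 0) : F t = FA (3 * (1 - t) / t) := by
  funext r z
  rw [F, FA, sinhCoord, three_sub_two_mul_div_eq ht, div_mul_eq_div_div, div_mul_eq_div_div]

section

variable {a z : ℝ}

theorem one_sub_div_sinh_sinhCoord_sq (ha : 0 < a) (hz : z < 1) :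
    1 - a / sinh (sinhCoord a z) ^ 2 = z := by
  rw [sinhCoord, sinh_arsinh, sq_sqrt (div_pos ha (sub_pos.2 hz)).le, div_div_cancel₀ ha.ne']
  ring

theorem sqrt_one_add_div_add_sqrt_pos (ha : 0 ≤ a) (hz : z < 1) :
    0 < √(1 + a) / √(1 - z) + √(1 + a / (1 - z)) :=
  add_pos_of_pos_of_nonneg
    (div_pos (sqrt_pos.2 (by linarith)) (sqrt_pos.2 (sub_pos.2 hz))) (sqrt_nonneg _)

theorem phiA_lt_one (ha : 0 ≤ a) (hz : z < 1) : phiA a z < 1 := by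
  have := sqrt_one_add_div_add_sqrt_pos ha hz
  rw [phiA]
  linarith [pow_pos (inv_pos.2 this) 2]

theorem sinhCoord_phiA (ha : 0 ≤ a) (hz : z < 1) :
    sinhCoord a (phiA a z) = sinhCoord a z + arcosh √(1 + a) := by
  have hB := sqrt_one_add_div_add_sqrt_pos ha hz
  have hθ : 1 ≤ √(1 + a) := one_le_sqrt.2 (by linarith)
  have hsinh : sinh (sinhCoord a z + arcosh √(1 + a)) =
      √a * (√(1 + a) / √(1 - z) + √(1 + a / (1 - z))) := by
    rw [sinhCoord, arcosh_eq_real_arcosh, sinh_add, sinh_arsinh, cosh_arsinh, sinh_arcosh hθ,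
      cosh_arcosh hθ, sq_sqrt (div_nonneg ha (sub_pos.2 hz).le), sq_sqrt (by linarith),
      add_sub_cancel_left, sqrt_div ha]
    ring
  rw [← arsinh_sinh (sinhCoord a z + _), hsinh, sinhCoord, phiA, sub_sub_cancel, inv_pow,
    div_inv_eq_mul, sqrt_mul ha, sqrt_sq hB.le]

theorem FA_zero (ha : 0 < a) (hz : z < 1) : FA a 0 z = z := by
  simpa [FA] using one_sub_div_sinh_sinhCoord_sq ha hz

theorem FA_succ (ha : 0 ≤ a) (hz : z < 1) (r : ℕ) : FA a (r + 1) z = FA a r (phiA a z) := by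
  rw [FA, FA, sinhCoord_phiA ha hz]
  push_cast
  ring_nf

theorem FA_eq_iterate (ha : 0 < a) (r : ℕ) : ∀ z < 1, FA a r z = (phiA a)^[r] z := by
  induction r with
  | zero => exact fun z hz => FA_zero ha hz
  | succ r ih =>
    intro z hz
    rw [FA_succ ha.le hz, ih _ (phiA_lt_one ha.le hz), Function.iterate_succ_apply]

end

theorem F_is_iterate_of_phiT
    (t : ℝ) (ht : t ∈ Set.Ioo (0:ℝ) 1) :
    (∀ z ∈ Set.Ico (0:ℝ) 1, F t 0 z = z) ∧
      (∀ (r : ℕ), ∀ z ∈ Set.Ico (0:ℝ) 1, F t (r + 1) z = F t r (phiT t z)) ∧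
      (∀ (r : ℕ), ∀ z ∈ Set.Ico (0:ℝ) 1, F t r z = (phiT t)^[r] z) := by
  obtain ⟨ht0, ht1⟩ := ht
  have ha : 0 < 3 * (1 - t) / t := div_pos (by linarith) ht0
  rw [F_eq_FA ht0.ne', phiT_eq_phiA ht0.ne']
  exact ⟨fun z hz => FA_zero ha hz.2, fun r z hz => FA_succ ha.le hz.2 r,
    fun r z hz => FA_eq_iterate ha r z hz.2⟩
end

section
/- The function G(λ) = (6λ)^{3/4} · cosh((6λ)^{1/4}) / sinh³((6λ)^{1/4}), defined for λ > 0, satisfies lim_{λ→0⁺} G(λ) = 1 and G is strictly decreasing in λ on (0,∞). -/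
open Real Filter Set

-- sinh t < t * cosh t for t > 0
lemma aux_sinh_lt (t : ℝ) (ht : 0 < t) : Real.sinh t < t * Real.cosh t := by
  have h : StrictMonoOn (fun x => x * Real.cosh x - Real.sinh x) (Set.Ici 0) := by
    apply strictMonoOn_of_deriv_pos (convex_Ici 0)
    · fun_prop
    · intro x hx
      rw [interior_Ici] at hx
      have : HasDerivAt (fun x => x * Real.cosh x - Real.sinh x)
          (1 * Real.cosh x + x * Real.sinh x - Real.cosh x) x := by
        exact ((hasDerivAt_id x).mul (Real.hasDerivAt_cosh x)).sub (Real.hasDerivAt_sinh x)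
      rw [this.deriv]
      have hs := Real.sinh_pos_iff.mpr hx
      have hx' : (0:ℝ) < x := hx
      nlinarith [mul_pos hx' hs]
  have := h (Set.self_mem_Ici) (le_of_lt ht : (0:ℝ) ≤ t) ht
  simp at this
  linarith

-- key: 3 sinh cosh + t sinh² - 3 t cosh² < 0 for t > 0
lemma aux_key (t : ℝ) (ht : 0 < t) :
    3 * Real.cosh t * Real.sinh t + t * Real.sinh t ^ 2 < 3 * t * Real.cosh t ^ 2 := by
  have h : StrictMonoOn (fun x => 2 * x * Real.cosh x ^ 2 + x - 3 * Real.sinh x * Real.cosh x)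
      (Set.Ici 0) := by
    apply strictMonoOn_of_deriv_pos (convex_Ici 0)
    · fun_prop
    · intro x hx
      rw [interior_Ici] at hx
      have h1 : HasDerivAt (fun x => 2 * x * Real.cosh x ^ 2 + x - 3 * Real.sinh x * Real.cosh x)
          ((2 * Real.cosh x ^ 2 + 2 * x * (2 * Real.cosh x * Real.sinh x)) + 1
            - (3 * Real.cosh x * Real.cosh x + 3 * Real.sinh x * Real.sinh x)) x := by
        have ha : HasDerivAt (fun x : ℝ => 2 * x * Real.cosh x ^ 2)
            (2 * Real.cosh x ^ 2 + 2 * x * (2 * Real.cosh x * Real.sinh x)) x := by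
          have := ((hasDerivAt_id x).const_mul 2).mul ((Real.hasDerivAt_cosh x).pow 2)
          exact this.congr_deriv (by norm_num [id] <;> ring)
        have hb : HasDerivAt (fun x : ℝ => 3 * Real.sinh x * Real.cosh x)
            (3 * Real.cosh x * Real.cosh x + 3 * Real.sinh x * Real.sinh x) x := by
          have := ((Real.hasDerivAt_sinh x).const_mul 3).mul (Real.hasDerivAt_cosh x)
          exact this
        exact (ha.add (hasDerivAt_id x)).sub hb |>.congr_deriv (by ring)
      rw [h1.deriv]
      have hs := Real.sinh_pos_iff.mpr hx
      have h2 := aux_sinh_lt x hx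
      have hc : Real.cosh x ^ 2 - Real.sinh x ^ 2 = 1 := Real.cosh_sq_sub_sinh_sq x
      nlinarith
  have := h (Set.self_mem_Ici) (le_of_lt ht : (0:ℝ) ≤ t) ht
  simp at this
  have hc : Real.cosh t ^ 2 - Real.sinh t ^ 2 = 1 := Real.cosh_sq_sub_sinh_sq t
  nlinarith

noncomputable def fAux (t : ℝ) : ℝ := t ^ 3 * Real.cosh t / Real.sinh t ^ 3

lemma fAux_strictAnti : StrictAntiOn fAux (Set.Ioi 0) := by
  apply strictAntiOn_of_deriv_neg (convex_Ioi 0)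
  · intro x hx
    have hs : Real.sinh x ≠ 0 := ne_of_gt (Real.sinh_pos_iff.mpr hx)
    have : ContinuousAt (fun t => t ^ 3 * Real.cosh t / Real.sinh t ^ 3) x :=
      ContinuousAt.div (by fun_prop) (by fun_prop) (pow_ne_zero 3 hs)
    exact this.continuousWithinAt
  · intro x hx
    rw [interior_Ioi] at hx
    have hs : 0 < Real.sinh x := Real.sinh_pos_iff.mpr hx
    have hd : HasDerivAt fAux
        (((3 * x ^ 2 * Real.cosh x + x ^ 3 * Real.sinh x) * Real.sinh x ^ 3
          - x ^ 3 * Real.cosh x * (3 * Real.sinh x ^ 2 * Real.cosh x)) / (Real.sinh x ^ 3) ^ 2) x := by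
      have hnum : HasDerivAt (fun t => t ^ 3 * Real.cosh t)
          (3 * x ^ 2 * Real.cosh x + x ^ 3 * Real.sinh x) x := by
        have h := ((hasDerivAt_pow 3 x).mul (Real.hasDerivAt_cosh x))
        exact h.congr_deriv (by norm_num)
      have hden : HasDerivAt (fun t => Real.sinh t ^ 3)
          (3 * Real.sinh x ^ 2 * Real.cosh x) x := by
        have h := (Real.hasDerivAt_sinh x).pow 3
        exact h.congr_deriv (by norm_num)
      exact hnum.div hden (pow_ne_zero 3 hs.ne')
    rw [hd.deriv]
    apply div_neg_of_neg_of_pos _ (by positivity)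
    have key := aux_key x hx
    nlinarith [mul_pos (mul_pos (pow_pos hs 2) (pow_pos hx 2)) (sub_pos.mpr key)]

lemma fAux_tendsto : Filter.Tendsto fAux (nhdsWithin 0 (Set.Ioi 0)) (nhds 1) := by
  have h1 : Filter.Tendsto (fun t => Real.sinh t / t) (nhdsWithin 0 (Set.Ioi 0)) (nhds 1) := by
    have := (Real.hasDerivAt_sinh 0)
    rw [hasDerivAt_iff_tendsto_slope] at this
    simp only [Real.cosh_zero] at this
    have h2 := this.mono_left (nhdsWithin_mono 0 (fun x hx => Set.mem_compl_singleton_iff.mpr (ne_of_gt hx)))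
    refine h2.congr (fun t => ?_)
    simp [slope, Real.sinh_zero, div_eq_inv_mul]
  have h3 : Filter.Tendsto (fun t => (Real.sinh t / t)⁻¹ ^ 3 * Real.cosh t)
      (nhdsWithin 0 (Set.Ioi 0)) (nhds 1) := by
    have hc : Filter.Tendsto Real.cosh (nhdsWithin 0 (Set.Ioi 0)) (nhds 1) := by
      have := Real.continuous_cosh.tendsto 0
      rw [Real.cosh_zero] at this
      exact this.mono_left nhdsWithin_le_nhds
    have := ((h1.inv₀ one_ne_zero).pow 3).mul hc
    simpa using this
  refine h3.congr' ?_
  filter_upwards [self_mem_nhdsWithin] with t ht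
  have ht' : (0:ℝ) < t := ht
  have hs : Real.sinh t ≠ 0 := ne_of_gt (Real.sinh_pos_iff.mpr ht')
  unfold fAux
  field_simp

theorem two_point_function_properties
    (G : ℝ → ℝ)
    (hG : ∀ lam : ℝ, 0 < lam →
      G lam = (6 * lam) ^ (3 / 4 : ℝ) * Real.cosh ((6 * lam) ^ (1 / 4 : ℝ)) /
        Real.sinh ((6 * lam) ^ (1 / 4 : ℝ)) ^ 3) :
    Filter.Tendsto G (nhdsWithin 0 (Set.Ioi 0)) (nhds 1) ∧
      StrictAntiOn G (Set.Ioi 0) := by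
  have hGf : ∀ lam : ℝ, 0 < lam → G lam = fAux ((6 * lam) ^ (1 / 4 : ℝ)) := by
    intro lam hlam
    have h6 : (0:ℝ) < 6 * lam := by linarith
    have hpow : ((6 * lam) ^ (1 / 4 : ℝ)) ^ 3 = (6 * lam) ^ (3 / 4 : ℝ) := by
      rw [← Real.rpow_natCast ((6 * lam) ^ (1 / 4 : ℝ)) 3, ← Real.rpow_mul h6.le]
      norm_num
    rw [hG lam hlam, fAux, hpow]
  have htend : Filter.Tendsto (fun lam : ℝ => (6 * lam) ^ (1 / 4 : ℝ))
      (nhdsWithin 0 (Set.Ioi 0)) (nhdsWithin 0 (Set.Ioi 0)) := by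
    rw [tendsto_nhdsWithin_iff]
    constructor
    · have : Filter.Tendsto (fun lam : ℝ => (6 * lam) ^ (1 / 4 : ℝ)) (nhds 0) (nhds 0) := by
        have h0 : ((6 * (0:ℝ)) ^ (1 / 4 : ℝ)) = 0 := by norm_num
        have := (Real.continuousAt_rpow_const (6 * 0) (1/4) (by norm_num)).comp
          ((continuous_const.mul continuous_id).continuousAt (x := (0:ℝ)))
        simpa [h0, Function.comp_def] using this.tendsto
      exact this.mono_left nhdsWithin_le_nhds
    · filter_upwards [self_mem_nhdsWithin] with lam hlam
      exact Real.rpow_pos_of_pos (by linarith [Set.mem_Ioi.mp hlam]) _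
  constructor
  · refine (fAux_tendsto.comp htend).congr' ?_
    filter_upwards [self_mem_nhdsWithin] with lam hlam
    exact (hGf lam hlam).symm
  · intro a ha b hb hab
    rw [hGf a ha, hGf b hb]
    apply fAux_strictAnti
    · exact Real.rpow_pos_of_pos (by linarith [Set.mem_Ioi.mp ha]) _
    · exact Real.rpow_pos_of_pos (by linarith [Set.mem_Ioi.mp hb]) _
    · exact Real.rpow_lt_rpow (by linarith [Set.mem_Ioi.mp ha]) (by linarith [hab]) (by norm_num)
end

section
/- For z ∈ [0,1), it holds that 1 - 2(1-z)/((1 + 2√(1-z))(1 + √(1-z))) = (y_c)^{-2}·K(1,z) where K(1,z) := (y_c)²·φ(0)/(1 - φ(0)/z)·(φ(z) - (φ(0)/z)·φ(φ(0))) for z > φ(0) = 3/4, y_c = 1/12, φ(z) = 1 - (1+1/√(1-z))^{-2}, and φ(φ(0)) = 8/9. That is, for z ∈ (3/4, 1): (3/4)/(1 - (3/4)/z)·(φ(z) - (3/(4z))·(8/9)) = 1 - 2(1-z)/((1 + 2√(1-z))(1 + √(1-z))). -/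
/-!
With `s = √(1 - z)`, so that `z = 1 - s²` and `0 < s < 1/2` on `(3/4, 1)`, every term becomes
rational in `s`: `φ z = (1 + 2s)/(1 + s)²`, and both sides reduce to `(1 + 3s)/((1 + s)(1 + 2s))`.
On the left this rests on the factorisation `3(1 + 2s)(1 - s) - 2(1 + s) = (1 + 3s)(1 - 2s)`,
whose factor `1 - 2s` cancels against `1 - 3/(4z) = (1 - 2s)(1 + 2s)/(4z)`.
-/

lemma one_sub_inv_one_add_one_div_sq {s : ℝ} (hs : s ≠ 0) (hs₁ : 1 + s ≠ 0) :
    1 - (1 + 1 / s)⁻¹ ^ 2 = (1 + 2 * s) / (1 + s) ^ 2 := by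
  have hs' : 1 + 1 / s = (1 + s) / s := by field_simp; ring
  rw [hs', inv_div, div_pow]
  field_simp
  ring

lemma deltaCapGF_eq_rational {s : ℝ} (h₁ : 1 - s ^ 2 ≠ 0) (h₂ : 1 - 4 * s ^ 2 ≠ 0) :
    (3/4) / (1 - (3/4) / (1 - s ^ 2)) *
        ((1 + 2 * s) / (1 + s) ^ 2 - (3 / (4 * (1 - s ^ 2))) * (8/9)) =
      (1 + 3 * s) / ((1 + 2 * s) * (1 + s)) := by
  have hp : 1 + s ≠ 0 := fun h => h₁ (by linear_combination (1 - s) * h)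
  have hm₂ : 1 - 2 * s ≠ 0 := fun h => h₂ (by linear_combination (1 + 2 * s) * h)
  have hd : 1 - (3/4) / (1 - s ^ 2) = (1 - 2 * s) * (1 + 2 * s) / (4 * (1 - s ^ 2)) := by
    field_simp; ring
  rw [hd]
  field_simp
  ring

lemma one_sub_two_mul_sq_div_eq {s : ℝ} (hp : 1 + s ≠ 0) (hp₂ : 1 + 2 * s ≠ 0) :
    1 - 2 * s ^ 2 / ((1 + 2 * s) * (1 + s)) = (1 + 3 * s) / ((1 + 2 * s) * (1 + s)) := by
  field_simp
  ring

theorem delta_cap_generating_identity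
    (φ : ℝ → ℝ)
    (hφ : ∀ z ∈ Set.Ico (0:ℝ) 1, φ z = 1 - (1 + 1 / Real.sqrt (1 - z))⁻¹ ^ 2) :
    ∀ z ∈ Set.Ioo (3/4 : ℝ) 1,
      (3/4) / (1 - (3/4) / z) * (φ z - (3 / (4 * z)) * (8/9)) =
        1 - 2 * (1 - z) /
          ((1 + 2 * Real.sqrt (1 - z)) * (1 + Real.sqrt (1 - z))) := by
  rintro z ⟨hz₁, hz₂⟩
  rw [hφ z ⟨by linarith, hz₂⟩]
  set s := Real.sqrt (1 - z)
  have hs : 0 < s := Real.sqrt_pos.mpr (by linarith)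
  have hz : z = 1 - s ^ 2 := by rw [Real.sq_sqrt (by linarith)]; ring
  rw [one_sub_inv_one_add_one_div_sq hs.ne' (by positivity), hz, sub_sub_cancel,
    one_sub_two_mul_sq_div_eq (by positivity) (by positivity), deltaCapGF_eq_rational (by linarith) (by linarith)]
end
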